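/- arXiv:2309.17283 — 2 statements merged into one kernel-verified Lean document; each statement's English description precedes it below -/
import Mathlib

section
/- Let Z be a metric space equipped with its Borel σ-algebra, X a measurable space, and κ : Z → Measure X a measurable family of probability measures that is L-Lipschitz with respect to total variation distance, i.e. |κ(z)(s) − κ(z')(s)| ≤ L · dist(z, z') for all measurable sets s ⊆ X and all z, z' ∈ Z. Let λ be a probability measure on Z, let V ⊆ Z be a Borel set with λ(V) = 1, let z₀ ∈ V, and let ε > 0 be such that dist(z, z₀) ≤ ε/L for every z ∈ V. Then the mixture μ := λ.bind κ satisfies |μ(s) − κ(z₀)(s)| ≤ ε for every measurable set s ⊆ X; that is, TV(μ, κ(z₀)) ≤ ε. -/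
/-!
The mass `(λ.bind κ)(s)` is the `λ`-average of `z ↦ κ(z)(s)`. Almost every `z` lies in `V`, where
`|κ(z)(s) - κ(z₀)(s)| ≤ L · dist z z₀ ≤ ε`, and averaging against a probability measure preserves
a uniform bound on the distance to a constant.
-/

open MeasureTheory

lemma mul_le_of_le_div_of_nonneg {𝕜 : Type*} [Field 𝕜] [LinearOrder 𝕜] [IsStrictOrderedRing 𝕜]
    {L d ε : 𝕜} (hε : 0 ≤ ε) (hd : 0 ≤ d) (h : d ≤ ε / L) : L * d ≤ ε := by
  rcases le_or_gt 0 L with hL | hL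
  · rw [mul_comm]
    exact mul_le_of_le_div₀ hε hL h
  · exact (mul_nonpos_of_nonpos_of_nonneg hL.le hd).trans hε

namespace MeasureTheory

variable {α : Type*} [MeasurableSpace α] {μ : Measure α}

lemma norm_integral_sub_le_of_ae_norm_sub_le {E : Type*} [NormedAddCommGroup E]
    [NormedSpace ℝ E] [CompleteSpace E] [IsProbabilityMeasure μ] {f : α → E} {c : E} {ε : ℝ}
    (hf : AEStronglyMeasurable f μ) (h : ∀ᵐ x ∂μ, ‖f x - c‖ ≤ ε) :
    ‖∫ x, f x ∂μ - c‖ ≤ ε := by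
  have hsub : Integrable (fun x => f x - c) μ :=
    .of_bound (hf.sub aestronglyMeasurable_const) ε h
  have hf_int : Integrable f μ :=
    (hsub.add (integrable_const c)).congr (.of_forall fun x => sub_add_cancel (f x) c)
  calc ‖∫ x, f x ∂μ - c‖ = ‖∫ x, (f x - c) ∂μ‖ := by
        rw [integral_sub hf_int (integrable_const c), integral_const, probReal_univ, one_smul]
    _ ≤ ε := by simpa using norm_integral_le_of_norm_le_const h

variable {β : Type*} [MeasurableSpace β]

lemma Measure.toReal_bind_apply {κ : α → Measure β} {s : Set β} (hs : MeasurableSet s)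
    (hκ : AEMeasurable κ μ) (hfin : ∀ᵐ x ∂μ, κ x s ≠ ⊤) :
    (μ.bind κ s).toReal = ∫ x, (κ x s).toReal ∂μ := by
  rw [Measure.bind_apply hs hκ,
    integral_toReal (f := fun x => κ x s) ((Measure.measurable_coe hs).comp_aemeasurable hκ)
      (hfin.mono fun _ hx => hx.lt_top)]

end MeasureTheory

theorem mixture_tv_close_of_tv_lipschitz_general
    {Z X : Type*} [MetricSpace Z] [MeasurableSpace Z] [MeasurableSpace X]
    (κ : Z → Measure X) (hκ : Measurable κ)
    (hκprob : ∀ z, IsProbabilityMeasure (κ z))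
    (L : ℝ)
    (hLip : ∀ s : Set X, MeasurableSet s → ∀ z z' : Z,
      |((κ z) s).toReal - ((κ z') s).toReal| ≤ L * dist z z')
    (lam : Measure Z) [IsProbabilityMeasure lam]
    (V : Set Z) (hV : MeasurableSet V) (hVfull : lam V = 1)
    (z₀ : Z)
    (ε : ℝ) (hε : 0 < ε)
    (hdiam : ∀ z ∈ V, dist z z₀ ≤ ε / L) :
    ∀ s : Set X, MeasurableSet s →
      |((lam.bind κ) s).toReal - ((κ z₀) s).toReal| ≤ ε := by
  intro s hs
  have := hκprob
  have hV_ae : ∀ᵐ z ∂lam, z ∈ V :=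
    (ae_mem_iff_measure_eq hV.nullMeasurableSet).2 (by rw [hVfull, measure_univ])
  have hclose : ∀ᵐ z ∂lam, ‖(κ z s).toReal - (κ z₀ s).toReal‖ ≤ ε := by
    filter_upwards [hV_ae] with z hz
    exact (hLip s hs z z₀).trans
      (mul_le_of_le_div_of_nonneg hε.le dist_nonneg (hdiam z hz))
  have hmeas : Measurable fun z => (κ z s).toReal :=
    ((Measure.measurable_coe hs).comp hκ).ennreal_toReal
  rw [Measure.toReal_bind_apply hs hκ.aemeasurable
    (ae_of_all _ fun z => measure_ne_top (κ z) s), ← Real.norm_eq_abs]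
  exact norm_integral_sub_le_of_ae_norm_sub_le hmeas.aestronglyMeasurable hclose

/-- If `z ↦ κ z` is an `L`-Lipschitz (in TV distance) family of probability measures and `λ`
is a probability measure supported on a set `V` of points at distance at most `ε / L` from
`z₀ ∈ V`, then the mixture `λ.bind κ` is within TV distance `ε` of `κ z₀`. -/
theorem mixture_tv_close_of_tv_lipschitz
    {Z X : Type*} [MetricSpace Z] [MeasurableSpace Z] [BorelSpace Z] [MeasurableSpace X]
    (κ : Z → Measure X) (hκ : Measurable κ)
    (hκprob : ∀ z, IsProbabilityMeasure (κ z))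
    (L : ℝ)
    (hLip : ∀ s : Set X, MeasurableSet s → ∀ z z' : Z,
      |((κ z) s).toReal - ((κ z') s).toReal| ≤ L * dist z z')
    (lam : Measure Z) [IsProbabilityMeasure lam]
    (V : Set Z) (hV : MeasurableSet V) (hVfull : lam V = 1)
    (z₀ : Z) (hz₀ : z₀ ∈ V)
    (ε : ℝ) (hε : 0 < ε)
    (hdiam : ∀ z ∈ V, dist z z₀ ≤ ε / L) :
    ∀ s : Set X, MeasurableSet s →
      |((lam.bind κ) s).toReal - ((κ z₀) s).toReal| ≤ ε :=
  mixture_tv_close_of_tv_lipschitz_general κ hκ hκprob L hLip lam V hV hVfull z₀ ε hε hdiam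
end

section
/- Let L, M ≥ 0 and let g : ℝ³ → ℝ be measurable with |g(x,y,z)| ≤ M for all (x,y,z) ∈ [0,1]³ and |g(x,y,z) − g(x,y,z')| ≤ L·|z − z'| for all (x,y) ∈ [0,1]² and all z, z' ∈ [0,1]. For z ∈ [0,1] define the normalized tilted density on the unit square f_z(x,y) = exp(g(x,y,z)) / ∫_{[0,1]²} exp(g(x',y',z)) dx' dy'. Then for all z, z' ∈ [0,1], (1/2) ∫_{[0,1]²} |f_z(x,y) − f_{z'}(x,y)| dx dy ≤ (e^{2L} − 1) · |z − z'|; that is, the family z ↦ f_z is Lipschitz in total variation distance with Lipschitz constant e^{2L} − 1. -/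
/-!
If the potentials at `z` and `z'` differ by at most `c = L |z - z'|`, the unnormalized densities
are within a factor `e^c` of each other, hence so are the normalizing constants, and the
normalized densities are within a factor `e^{2c}`. This bounds their `L¹` distance by
`e^{2c} - 1`, and convexity of `exp` gives `e^{2L |z - z'|} - 1 ≤ (e^{2L} - 1) |z - z'|`.
-/

open MeasureTheory Real Set

lemma div_le_sq_mul_div {a b A B u : ℝ} (hu : 0 < u) (hb : 0 ≤ b) (hA : 0 < A) (hB : 0 < B)
    (hab : a ≤ u * b) (hBA : B ≤ u * A) : a / A ≤ u ^ 2 * (b / B) := by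
  calc a / A ≤ u * b / A := div_le_div_of_nonneg_right hab hA.le
    _ ≤ u * b / (B / u) := div_le_div_of_nonneg_left (mul_nonneg hu.le hb) (div_pos hB hu)
        ((div_le_iff₀ hu).2 (by linarith))
    _ = u ^ 2 * (b / B) := by field_simp

lemma abs_sub_le_sub_one_mul {t r v : ℝ} (hv : 1 ≤ v) (htr : t ≤ v * r)
    (hrt : r ≤ v * t) : |t - r| ≤ (v - 1) * r := by
  rw [abs_le]
  constructor
  · nlinarith [mul_nonneg (sub_nonneg.2 hv) (sub_nonneg.2 hrt)]
  · linarith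

variable {α : Type*} [MeasurableSpace α] {μ : Measure α}

theorem integral_abs_div_integral_sub_div_integral_le {p q : α → ℝ} {u : ℝ} (hu : 1 ≤ u)
    (hp : Integrable p μ) (hq : Integrable q μ) (hq_nonneg : ∀ᵐ x ∂μ, 0 ≤ q x)
    (hq_pos : 0 < ∫ x, q x ∂μ) (hpq : ∀ᵐ x ∂μ, p x ≤ u * q x)
    (hqp : ∀ᵐ x ∂μ, q x ≤ u * p x) :
    ∫ x, |p x / ∫ y, p y ∂μ - q x / ∫ y, q y ∂μ| ∂μ ≤ u ^ 2 - 1 := by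
  have hPQ : ∫ x, p x ∂μ ≤ u * ∫ x, q x ∂μ := by
    rw [← integral_const_mul]; exact integral_mono_ae hp (hq.const_mul u) hpq
  have hQP : ∫ x, q x ∂μ ≤ u * ∫ x, p x ∂μ := by
    rw [← integral_const_mul]; exact integral_mono_ae hq (hp.const_mul u) hqp
  have hp_pos : 0 < ∫ x, p x ∂μ := by nlinarith
  calc ∫ x, |p x / ∫ y, p y ∂μ - q x / ∫ y, q y ∂μ| ∂μ
      ≤ ∫ x, (u ^ 2 - 1) * (q x / ∫ y, q y ∂μ) ∂μ := by
        refine integral_mono_ae ((hp.div_const _).sub (hq.div_const _)).abs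
          ((hq.div_const _).const_mul _) ?_
        filter_upwards [hq_nonneg, hpq, hqp] with x hqx hpqx hqpx
        have hpx : 0 ≤ p x := by nlinarith
        exact abs_sub_le_sub_one_mul (one_le_pow₀ hu)
          (div_le_sq_mul_div (by linarith) hqx hp_pos hq_pos hpqx hQP)
          (div_le_sq_mul_div (by linarith) hpx hq_pos hp_pos hqpx hPQ)
    _ = u ^ 2 - 1 := by rw [integral_const_mul, integral_div, div_self hq_pos.ne', mul_one]

theorem integral_abs_exp_div_integral_sub_le [NeZero μ] {φ ψ : α → ℝ} {c : ℝ}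
    (hφ : Integrable (fun x => exp (φ x)) μ) (hψ : Integrable (fun x => exp (ψ x)) μ)
    (hφψ : ∀ᵐ x ∂μ, |φ x - ψ x| ≤ c) :
    ∫ x, |exp (φ x) / ∫ y, exp (φ y) ∂μ - exp (ψ x) / ∫ y, exp (ψ y) ∂μ| ∂μ
      ≤ exp (2 * c) - 1 := by
  have hc : 0 ≤ c := by
    obtain ⟨x, hx⟩ := hφψ.exists
    exact (abs_nonneg _).trans hx
  have hu : exp c ^ 2 = exp (2 * c) := by rw [sq, ← exp_add, two_mul]
  rw [← hu]
  refine integral_abs_div_integral_sub_div_integral_le (one_le_exp hc) hφ hψ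
    (ae_of_all _ fun x => (exp_pos _).le) (integral_exp_pos hψ) ?_ ?_
  · filter_upwards [hφψ] with x hx
    rw [← exp_add, exp_le_exp]
    linarith [(abs_le.1 hx).2]
  · filter_upwards [hφψ] with x hx
    rw [← exp_add, exp_le_exp]
    linarith [(abs_le.1 hx).1]

lemma integrableOn_exp_of_le {s : Set α} (hs : μ s ≠ ⊤) (hsm : MeasurableSet s) {φ : α → ℝ}
    (hφ : Measurable φ) {M : ℝ} (hM : ∀ x ∈ s, φ x ≤ M) :
    IntegrableOn (fun x => exp (φ x)) s μ := by
  refine Measure.integrableOn_of_bounded (M := exp M) hs hφ.exp.aestronglyMeasurable ?_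
  filter_upwards [ae_restrict_mem hsm] with x hx
  rw [norm_of_nonneg (exp_pos _).le, exp_le_exp]
  exact hM x hx

lemma exp_mul_sub_one_le_mul {a t : ℝ} (ht₀ : 0 ≤ t) (ht₁ : t ≤ 1) :
    exp (a * t) - 1 ≤ (exp a - 1) * t := by
  have h := convexOn_exp.2 (mem_univ 0) (mem_univ a) (sub_nonneg.2 ht₁) ht₀ (by ring)
  simp only [smul_eq_mul, mul_zero, zero_add, exp_zero] at h
  rw [mul_comm a t]
  linarith

theorem exponential_tilting_tv_lipschitz_general
    (L M : ℝ)
    (g : ℝ → ℝ → ℝ → ℝ)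
    (hg_meas : Measurable fun p : ℝ × ℝ × ℝ => g p.1 p.2.1 p.2.2)
    (hg_bdd : ∀ x ∈ Set.Icc (0:ℝ) 1, ∀ y ∈ Set.Icc (0:ℝ) 1, ∀ z ∈ Set.Icc (0:ℝ) 1,
      |g x y z| ≤ M)
    (hg_lip : ∀ x ∈ Set.Icc (0:ℝ) 1, ∀ y ∈ Set.Icc (0:ℝ) 1,
      ∀ z ∈ Set.Icc (0:ℝ) 1, ∀ z' ∈ Set.Icc (0:ℝ) 1,
      |g x y z - g x y z'| ≤ L * |z - z'|)
    (f : ℝ → ℝ → ℝ → ℝ)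
    (hf : ∀ z x y, f z x y =
      exp (g x y z) /
        ∫ x' in Set.Icc (0:ℝ) 1, ∫ y' in Set.Icc (0:ℝ) 1, exp (g x' y' z)) :
    ∀ z ∈ Set.Icc (0:ℝ) 1, ∀ z' ∈ Set.Icc (0:ℝ) 1,
      (1 / 2) * ∫ x in Set.Icc (0:ℝ) 1, ∫ y in Set.Icc (0:ℝ) 1, |f z x y - f z' x y| ≤
        (exp (2 * L) - 1) * |z - z'| := by
  intro z hz z' hz'
  set S := Icc (0:ℝ) 1
  have hSS : MeasurableSet (S ×ˢ S) := measurableSet_Icc.prod measurableSet_Icc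
  have hvol : volume (S ×ˢ S) = 1 := by
    rw [Measure.volume_eq_prod, Measure.prod_prod]; simp [S]
  have : NeZero (volume.restrict (S ×ˢ S)) := ⟨by simp [Measure.restrict_eq_zero, hvol]⟩
  have hint : ∀ w ∈ S, IntegrableOn (fun q : ℝ × ℝ => exp (g q.1 q.2 w)) (S ×ˢ S) :=
    fun w hw => integrableOn_exp_of_le (by simp [hvol]) hSS
      (hg_meas.comp (measurable_fst.prodMk (measurable_snd.prodMk measurable_const)))
      fun q hq => (abs_le.1 (hg_bdd _ hq.1 _ hq.2 w hw)).2
  have hnorm : ∀ w ∈ S, ∫ x in S, ∫ y in S, exp (g x y w)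
      = ∫ q in S ×ˢ S, exp (g q.1 q.2 w) :=
    fun w hw => (setIntegral_prod _ (hint w hw)).symm
  have htv := integral_abs_exp_div_integral_sub_le (hint z hz) (hint z' hz')
    (c := L * |z - z'|) ((ae_restrict_mem hSS).mono fun q hq => hg_lip _ hq.1 _ hq.2 z hz z' hz')
  simp only [hf, hnorm z hz, hnorm z' hz']
  rw [← setIntegral_prod (fun q : ℝ × ℝ => |exp (g q.1 q.2 z) / _ - exp (g q.1 q.2 z') / _|)
    (((hint z hz).div_const _).sub ((hint z' hz').div_const _)).abs, ← Measure.volume_eq_prod]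
  have hd : |z - z'| ≤ 1 := abs_le.2 ⟨by linarith [hz.1, hz'.2], by linarith [hz.2, hz'.1]⟩
  refine le_trans ?_ (htv.trans ?_)
  · rw [one_div, inv_mul_eq_div]
    exact half_le_self (integral_nonneg fun _ => abs_nonneg _)
  · rw [← mul_assoc]
    exact exp_mul_sub_one_le_mul (abs_nonneg _) hd

/-- Exponential tilting on the unit square: if `g` is bounded by `M` on `[0,1]³` and
`L`-Lipschitz in its third variable on `[0,1]³`, then the normalized densities
`f_z(x,y) = exp(g x y z) / ∫∫ exp(g x' y' z)` form a family that is `(e^{2L} - 1)`-Lipschitz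
in total variation distance as a function of `z ∈ [0,1]`. -/
theorem exponential_tilting_tv_lipschitz
    (L M : ℝ) (hL : 0 ≤ L) (hM : 0 ≤ M)
    (g : ℝ → ℝ → ℝ → ℝ)
    (hg_meas : Measurable fun p : ℝ × ℝ × ℝ => g p.1 p.2.1 p.2.2)
    (hg_bdd : ∀ x ∈ Set.Icc (0:ℝ) 1, ∀ y ∈ Set.Icc (0:ℝ) 1, ∀ z ∈ Set.Icc (0:ℝ) 1,
      |g x y z| ≤ M)
    (hg_lip : ∀ x ∈ Set.Icc (0:ℝ) 1, ∀ y ∈ Set.Icc (0:ℝ) 1,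
      ∀ z ∈ Set.Icc (0:ℝ) 1, ∀ z' ∈ Set.Icc (0:ℝ) 1,
      |g x y z - g x y z'| ≤ L * |z - z'|)
    (f : ℝ → ℝ → ℝ → ℝ)
    (hf : ∀ z x y, f z x y =
      exp (g x y z) /
        ∫ x' in Set.Icc (0:ℝ) 1, ∫ y' in Set.Icc (0:ℝ) 1, exp (g x' y' z)) :
    ∀ z ∈ Set.Icc (0:ℝ) 1, ∀ z' ∈ Set.Icc (0:ℝ) 1,
      (1 / 2) * ∫ x in Set.Icc (0:ℝ) 1, ∫ y in Set.Icc (0:ℝ) 1, |f z x y - f z' x y| ≤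
        (exp (2 * L) - 1) * |z - z'| :=
  exponential_tilting_tv_lipschitz_general L M g hg_meas hg_bdd hg_lip f hf
end
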